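/- Let m > n ≥ 1 and consider vectors λ in Q^{m+n} of the form λ = Σ a_{ij}(ε_i − δ_j), summing over pairs with r < i ≤ m and 1 ≤ j ≤ n (where r = n), with all coefficients a_{ij} ≥ 0. If λ satisfies ⟨ε_t − ε_{t+1}, λ⟩ ≥ 0 for all r ≤ t ≤ m−1, then all a_{ij} = 0, i.e., λ = 0. -/

import Mathlib

/-- `ε_i`, a standard basis vector among the first `m` coordinates of `ℚ^{m+n}`. -/
noncomputable def epsV (m n : ℕ) (i : Fin m) : (Fin m ⊕ Fin n) → ℚ := Pi.single (Sum.inl i) 1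

/-- `δ_j`, a standard basis vector among the last `n` coordinates of `ℚ^{m+n}`. -/
noncomputable def deltaV (m n : ℕ) (j : Fin n) : (Fin m ⊕ Fin n) → ℚ := Pi.single (Sum.inr j) 1

/-!
The `ε_k`-coordinate of `λ` is the row sum `s_k = Σ_j a_{kj} ≥ 0`, and `⟨ε_t - ε_{t+1}, λ⟩ = s_t - s_{t+1}`.
The rows below `n` vanish, so `s_{n-1} = 0`, and the dominance conditions make `s` decrease from
there on; a nonnegative sequence that starts at `0` and decreases is identically `0`.
-/

theorem Fin.eq_zero_of_nonneg_of_succ_le {α : Type*} [PartialOrder α] [Zero α] {m c : ℕ}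
    (hc : 1 ≤ c) (f : Fin m → α) (hnonneg : ∀ i, 0 ≤ f i)
    (hbase : ∀ i : Fin m, (i : ℕ) < c → f i = 0)
    (hstep : ∀ (t : Fin m) (ht : (t : ℕ) + 1 < m), c ≤ (t : ℕ) + 1 → f ⟨(t : ℕ) + 1, ht⟩ ≤ f t)
    (i : Fin m) : f i = 0 := by
  obtain ⟨i, hi⟩ := i
  induction i with
  | zero => exact hbase _ hc
  | succ t ih =>
    by_cases htc : t + 1 < c
    · exact hbase _ htc
    · have hprev : f ⟨t, by omega⟩ = 0 := ih (by omega)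
      exact le_antisymm (hprev ▸ hstep ⟨t, by omega⟩ hi (not_lt.mp htc)) (hnonneg _)

theorem sum_smul_epsV_sub_deltaV_inl {m n : ℕ} (a : Fin m → Fin n → ℚ) (k : Fin m) :
    (∑ i, ∑ j, a i j • (epsV m n i - deltaV m n j)) (Sum.inl k) = ∑ j, a k j := by
  simp [epsV, deltaV, Finset.sum_apply, Pi.single_apply]

theorem sum_epsV_sub_epsV_mul {m n : ℕ} (t t' : Fin m) (v : Fin m ⊕ Fin n → ℚ) :
    ∑ x, (epsV m n t - epsV m n t') x * v x = v (Sum.inl t) - v (Sum.inl t') := by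
  simp [epsV, Pi.single_apply, sub_mul]

theorem stmt3_general (m n : ℕ) (hn : 1 ≤ n)
    (a : Fin m → Fin n → ℚ)
    (ha0 : ∀ i j, 0 ≤ a i j)
    (hsupp : ∀ (i : Fin m) (j : Fin n), (i : ℕ) < n → a i j = 0)
    (lam : (Fin m ⊕ Fin n) → ℚ)
    (hlam : lam = ∑ i, ∑ j, a i j • (epsV m n i - deltaV m n j))
    (hdom : ∀ (t : Fin m) (ht : (t : ℕ) + 1 < m), n ≤ (t : ℕ) + 1 →
      0 ≤ ∑ x, (epsV m n t - epsV m n ⟨(t : ℕ) + 1, ht⟩) x * lam x) :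
    (∀ i j, a i j = 0) ∧ lam = 0 := by
  have hrow : ∀ k, lam (Sum.inl k) = ∑ j, a k j := fun k => by
    rw [hlam, sum_smul_epsV_sub_deltaV_inl]
  have hlam_inl : ∀ k, lam (Sum.inl k) = 0 := by
    refine Fin.eq_zero_of_nonneg_of_succ_le hn _ (fun k => ?_) (fun k hk => ?_) (fun t ht htn => ?_)
    · exact hrow k ▸ Finset.sum_nonneg fun j _ => ha0 k j
    · exact hrow k ▸ Finset.sum_eq_zero fun j _ => hsupp k j hk
    · have := hdom t ht htn
      rw [sum_epsV_sub_epsV_mul] at this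
      linarith
  have ha : ∀ i j, a i j = 0 := fun i j =>
    (Finset.sum_eq_zero_iff_of_nonneg fun j _ => ha0 i j).mp (hrow i ▸ hlam_inl i) j (Finset.mem_univ j)
  exact ⟨ha, by simp [hlam, ha]⟩

/-- Let `m > n ≥ 1` and `r = n`.  If `λ = Σ a_{ij} (ε_i - δ_j)`, summing over pairs with
`r < i ≤ m` and `1 ≤ j ≤ n` (0-indexed: rows `i` with `n ≤ i`), all `a_{ij} ≥ 0`, and
`⟨ε_t - ε_{t+1}, λ⟩ ≥ 0` for all `r ≤ t ≤ m - 1`, then all `a_{ij} = 0`, i.e. `λ = 0`. -/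
theorem stmt3 (m n : ℕ) (hn : 1 ≤ n) (hmn : n < m)
    (a : Fin m → Fin n → ℚ)
    (ha0 : ∀ i j, 0 ≤ a i j)
    (hsupp : ∀ (i : Fin m) (j : Fin n), (i : ℕ) < n → a i j = 0)
    (lam : (Fin m ⊕ Fin n) → ℚ)
    (hlam : lam = ∑ i, ∑ j, a i j • (epsV m n i - deltaV m n j))
    (hdom : ∀ (t : Fin m) (ht : (t : ℕ) + 1 < m), n ≤ (t : ℕ) + 1 →
      0 ≤ ∑ x, (epsV m n t - epsV m n ⟨(t : ℕ) + 1, ht⟩) x * lam x) :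
    (∀ i j, a i j = 0) ∧ lam = 0 :=
  stmt3_general m n hn a ha0 hsupp lam hlam hdom
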